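/- The optimistic edit-distance loss increases by at most one per character (δ_o ≤ 1): Let C be a type with decidable equality, let t and y be lists over C, and let c ∈ C. Define f(y) = min over 0 ≤ k ≤ |t| of the Levenshtein distance (with unit insertion, deletion and substitution costs) between y and the prefix t.take k. Then f(y ++ [c]) ≤ f(y) + 1. -/

import Mathlib

/-! Levenshtein edit distance, as it was defined in Mathlib (`Mathlib/Data/List/EditDistance/Defs.lean`),
which has since been removed from Mathlib. -/

namespace Levenshtein

/-- A cost structure for Levenshtein edit distance. -/
structure Cost (α β δ : Type*) where
  /-- Cost to delete an element from a list. -/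
  delete : α → δ
  /-- Cost in insert an element into a list. -/
  insert : β → δ
  /-- Cost to substitute one element for another in a list. -/
  substitute : α → β → δ

/-- The default cost structure, for which all operations cost `1`. -/
def defaultCost {α : Type*} [DecidableEq α] : Cost α α ℕ where
  delete _ := 1
  insert _ := 1
  substitute a b := if a = b then 0 else 1

/-- (Implementation detail for `levenshtein`) -/
def impl {α β δ : Type*} [AddZeroClass δ] [Min δ] (C : Cost α β δ)
    (xs : List α) (y : β) (d : {r : List δ // 0 < r.length}) : {r : List δ // 0 < r.length} :=
  let ⟨ds, w⟩ := d
  xs.zip (ds.zip ds.tail) |>.foldr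
    (init := ⟨[C.insert y + ds.getLast (List.length_pos_iff_ne_nil.mp w)], by simp⟩)
    (fun ⟨x, d₀, d₁⟩ ⟨r, w⟩ =>
      ⟨min (C.delete x + r[0]) (min (C.insert y + d₀) (C.substitute x y + d₁)) :: r, by simp⟩)

end Levenshtein

/-- `suffixLevenshtein C xs ys` computes the Levenshtein distance
from each suffix of the list `xs` to the list `ys`. -/
def suffixLevenshtein {α β δ : Type*} [AddZeroClass δ] [Min δ] (C : Levenshtein.Cost α β δ)
    (xs : List α) (ys : List β) : {r : List δ // 0 < r.length} :=
  ys.foldr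
    (Levenshtein.impl C xs)
    (xs.foldr (init := ⟨[0], by simp⟩) (fun a ⟨r, _⟩ => ⟨(C.delete a + r[0]) :: r, by simp⟩))

/-- `levenshtein C xs ys` computes the Levenshtein distance from `xs` to `ys`. -/
def levenshtein {α β δ : Type*} [AddZeroClass δ] [Min δ] (C : Levenshtein.Cost α β δ)
    (xs : List α) (ys : List β) : δ :=
  let ⟨r, w⟩ := suffixLevenshtein C xs ys
  r[0]

/-! Appending `c` to the source costs at most one deletion: by induction along the edit-distance
recursion, `d(y ++ [c], s) ≤ d(y, s) + 1` for every target `s`, in particular for every prefix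
`t.take k`; taking `k` to be a minimiser of the right-hand side gives the bound on the minima. -/

namespace Levenshtein

variable {α β δ : Type*} [AddZeroClass δ] [Min δ] (C : Cost α β δ)

theorem impl_cons {x : α} {xs : List α} {y : β} {d : δ} {ds : List δ} (w' : 0 < ds.length)
    (w : 0 < (d :: ds).length) :
    impl C (x :: xs) y ⟨d :: ds, w⟩ =
      let ⟨r, w⟩ := impl C xs y ⟨ds, w'⟩
      ⟨min (C.delete x + r[0]) (min (C.insert y + d) (C.substitute x y + ds[0])) :: r, by simp⟩ :=
  match ds, w' with | _ :: _, _ => rfl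

theorem impl_cons_fst_zero {x : α} {xs : List α} {y : β} {d : δ} {ds : List δ} (w' : 0 < ds.length)
    (w : 0 < (d :: ds).length) :
    (impl C (x :: xs) y ⟨d :: ds, w⟩).1[0]'(impl C (x :: xs) y ⟨d :: ds, w⟩).2 =
      min (C.delete x + (impl C xs y ⟨ds, w'⟩).1[0]'(impl C xs y ⟨ds, w'⟩).2)
        (min (C.insert y + d) (C.substitute x y + ds[0])) :=
  match ds, w' with | _ :: _, _ => rfl

theorem impl_length {xs : List α} {y : β} (d : {r : List δ // 0 < r.length})
    (w : d.1.length = xs.length + 1) :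
    (impl C xs y d).1.length = xs.length + 1 := by
  induction xs generalizing d with
  | nil => rfl
  | cons x xs ih =>
    match d, w with
    | ⟨d₁ :: d₂ :: ds, _⟩, w =>
      rw [impl_cons C (by simp)]
      simpa using ih ⟨d₂ :: ds, by simp⟩ (by simpa using w)

end Levenshtein

section Recursion

open Levenshtein

theorem subtype_ext_of_getElem_zero_of_tail {δ : Type*} {l₁ l₂ : {r : List δ // 0 < r.length}}
    (h₀ : l₁.1[0]'l₁.2 = l₂.1[0]'l₂.2) (h : l₁.1.tail = l₂.1.tail) : l₁ = l₂ := by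
  match l₁, l₂ with
  | ⟨_ :: _, _⟩, ⟨_ :: _, _⟩ => simp_all

variable {α β δ : Type*} [AddZeroClass δ] [Min δ] (C : Cost α β δ)

theorem suffixLevenshtein_length (xs : List α) (ys : List β) :
    (suffixLevenshtein C xs ys).1.length = xs.length + 1 := by
  induction ys with
  | nil =>
    induction xs with
    | nil => rfl
    | cons _ xs ih => simpa [suffixLevenshtein] using ih
  | cons y ys ih => exact impl_length C _ ih

theorem suffixLevenshtein_cons₁ (x : α) (xs : List α) (ys : List β) :
    suffixLevenshtein C (x :: xs) ys =
      ⟨levenshtein C (x :: xs) ys :: (suffixLevenshtein C xs ys).1, by simp⟩ := by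
  induction ys with
  | nil => rfl
  | cons y ys ih =>
    refine subtype_ext_of_getElem_zero_of_tail rfl ?_
    show (impl C (x :: xs) y (suffixLevenshtein C (x :: xs) ys)).1.tail = _
    rw [ih, impl_cons C (by simp [suffixLevenshtein_length])]
    rfl

theorem levenshtein_cons_nil (x : α) (xs : List α) :
    levenshtein C (x :: xs) [] = C.delete x + levenshtein C xs [] := rfl

theorem levenshtein_cons_cons (x : α) (xs : List α) (y : β) (ys : List β) :
    levenshtein C (x :: xs) (y :: ys) =
      min (C.delete x + levenshtein C xs (y :: ys))
        (min (C.insert y + levenshtein C (x :: xs) ys)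
          (C.substitute x y + levenshtein C xs ys)) := by
  show (impl C (x :: xs) y (suffixLevenshtein C (x :: xs) ys)).1[0]'(by
    simp [impl_length, suffixLevenshtein_length]) = _
  simp only [suffixLevenshtein_cons₁]
  exact impl_cons_fst_zero C _ _

end Recursion

section Monotonicity

open Levenshtein

variable {α β δ : Type*}

theorem levenshtein_cons_le_delete_add [AddZeroClass δ] [LinearOrder δ] (C : Cost α β δ)
    (x : α) (xs : List α) (ys : List β) :
    levenshtein C (x :: xs) ys ≤ C.delete x + levenshtein C xs ys := by
  cases ys with
  | nil => exact (levenshtein_cons_nil C x xs).le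
  | cons y ys => exact (levenshtein_cons_cons C x xs y ys).trans_le (min_le_left _ _)

theorem levenshtein_append_singleton_le [AddCommMonoid δ] [LinearOrder δ]
    [IsOrderedAddMonoid δ] (C : Cost α β δ) (a : α) (xs : List α) (ys : List β) :
    levenshtein C (xs ++ [a]) ys ≤ levenshtein C xs ys + C.delete a := by
  induction xs generalizing ys with
  | nil => simpa [add_comm] using levenshtein_cons_le_delete_add C a [] ys
  | cons x xs ihx =>
    induction ys with
    | nil =>
      rw [List.cons_append, levenshtein_cons_nil, levenshtein_cons_nil, add_assoc]
      gcongr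
      exact ihx []
    | cons y ys ihy =>
      rw [List.cons_append, levenshtein_cons_cons, levenshtein_cons_cons, ← min_add_add_right,
        ← min_add_add_right, add_assoc, add_assoc, add_assoc]
      exact min_le_min (add_le_add_right (ihx _) _)
        (min_le_min (add_le_add_right ihy _) (add_le_add_right (ihx _) _))

end Monotonicity

/-- The optimistic edit-distance loss increases by at most one per
character (`δ_o ≤ 1`): with
`f y = min_{0 ≤ k ≤ |t|} ρ_levenshtein(y, t.take k)` (unit insertion,
deletion and substitution costs), `f (y ++ [c]) ≤ f y + 1`. -/
theorem optimistic_loss_step_le_one {C : Type*} [DecidableEq C]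
    (t y : List C) (c : C) :
    (Finset.range (t.length + 1)).inf' Finset.nonempty_range_add_one
        (fun k => levenshtein Levenshtein.defaultCost (y ++ [c]) (t.take k)) ≤
      (Finset.range (t.length + 1)).inf' Finset.nonempty_range_add_one
        (fun k => levenshtein Levenshtein.defaultCost y (t.take k)) + 1 := by
  obtain ⟨k, hk, hmin⟩ := Finset.exists_mem_eq_inf' Finset.nonempty_range_add_one
    (fun k => levenshtein Levenshtein.defaultCost y (t.take k))
  rw [hmin]
  exact (Finset.inf'_le _ hk).trans
    (levenshtein_append_singleton_le Levenshtein.defaultCost c y (t.take k))
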